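/- arXiv:0710.2357 — 4 statements merged into one kernel-verified Lean document; each statement's English description precedes it below -/
import Mathlib

section
/- In a balanced loaded spinal stack, if w_i ≥ 0 is the point weight on block B_i, t_i = ∑_{j=1}^i (1 + w_j) with t_0 = 0, then the block displacements satisfying the equilibrium conditions are uniquely d_i = (w_i + 1/2)/t_i = 1 − (t_{i−1} + 1/2)/t_i for 1 ≤ i ≤ k. -/
/-- In a balanced loaded spinal stack with point weights `w i ≥ 0` and cumulative
loads `t i = ∑_{j=1}^i (1 + w j)`, `t 0 = 0`, the displacements satisfying the
equilibrium (moment) condition `d i * t i - (1/2 + w i) = 0` are uniquely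
`d i = (w i + 1/2) / t i = 1 - (t (i-1) + 1/2) / t i` for `1 ≤ i ≤ k`. -/
theorem spinal_balance_displacements (k : ℕ) (w t d : ℕ → ℝ)
    (hw : ∀ i, 1 ≤ i → i ≤ k → 0 ≤ w i)
    (ht0 : t 0 = 0)
    (ht : ∀ i, 1 ≤ i → i ≤ k → t i = t (i - 1) + w i + 1)
    (hbal : ∀ i, 1 ≤ i → i ≤ k → d i * t i - (1 / 2 + w i) = 0) :
    ∀ i, 1 ≤ i → i ≤ k →
      d i = (w i + 1 / 2) / t i ∧ d i = 1 - (t (i - 1) + 1 / 2) / t i := by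
  have hnn : ∀ i, i ≤ k → 0 ≤ t i := by
    intro i
    induction i with
    | zero => intro _; simp [ht0]
    | succ n ih =>
      intro hle
      have h1 : 1 ≤ n + 1 := Nat.le_add_left 1 n
      rw [ht (n + 1) h1 hle]
      simp only [Nat.add_sub_cancel]
      have := ih (Nat.le_of_succ_le hle)
      have := hw (n + 1) h1 hle
      linarith
  intro i h1 hk
  have hpos : 0 < t i := by
    rw [ht i h1 hk]
    have := hnn (i - 1) (le_trans (Nat.sub_le i 1) hk)
    have := hw i h1 hk
    linarith
  have hb := hbal i h1 hk
  have hd : d i = (w i + 1 / 2) / t i := by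
    field_simp
    linarith
  refine ⟨hd, ?_⟩
  rw [hd, ht i h1 hk]
  have hne : t (i - 1) + w i + 1 ≠ 0 := by rw [← ht i h1 hk]; exact ne_of_gt hpos
  field_simp
  ring
end

section
/- The maximum overhang achievable by a balanced loaded spinal stack of total weight w ≥ 1 is less than ln w + 1. Formally: if t_0 = 0 < t_1 < t_2 < ⋯ < t_k = w with t_i − t_{i−1} ≥ 1 for all i, then ∑_{i=1}^k (1 − (t_{i−1} + 1/2)/t_i) < ln w + 1. -/
lemma spinal_t_lower (k : ℕ) (t : ℕ → ℝ) (ht0 : t 0 = 0)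
    (ht : ∀ i, 1 ≤ i → i ≤ k → 1 ≤ t i - t (i - 1)) :
    ∀ i, i ≤ k → (i : ℝ) ≤ t i := by
  intro i
  induction i with
  | zero => intro _; simp [ht0]
  | succ n ih =>
    intro hle
    have h1 := ht (n + 1) (Nat.le_add_left 1 n) hle
    have h2 := ih (Nat.le_of_succ_le hle)
    simp only [Nat.add_sub_cancel] at h1
    push_cast
    linarith

lemma spinal_aux (t : ℕ → ℝ) (ht0 : t 0 = 0) :
    ∀ k, 1 ≤ k → (∀ i, 1 ≤ i → i ≤ k → 1 ≤ t i - t (i - 1)) →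
    ∑ i ∈ Finset.Icc 1 k, (1 - (t (i - 1) + 1 / 2) / t i) < Real.log (t k) + 1 := by
  intro k
  induction k with
  | zero => omega
  | succ n ih =>
    intro _ ht
    have hlow := spinal_t_lower (n + 1) t ht0 ht
    have htn1 : (1 : ℝ) ≤ t (n + 1) := by
      have := hlow (n + 1) le_rfl
      push_cast at this; linarith
    have htn1pos : (0 : ℝ) < t (n + 1) := by linarith
    rcases Nat.eq_zero_or_pos n with hn | hn
    · subst hn
      simp only [Finset.Icc_self, Finset.sum_singleton]
      have hlog : 0 ≤ Real.log (t 1) := Real.log_nonneg htn1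
      have : (t 0 + 1 / 2) / t 1 > 0 := by
        rw [ht0]; positivity
      linarith
    · have hsum : ∑ i ∈ Finset.Icc 1 (n + 1), (1 - (t (i - 1) + 1 / 2) / t i)
          = (∑ i ∈ Finset.Icc 1 n, (1 - (t (i - 1) + 1 / 2) / t i))
            + (1 - (t n + 1 / 2) / t (n + 1)) := by
        rw [Finset.sum_Icc_succ_top (by omega : 1 ≤ n + 1)
          (fun i => 1 - (t (i - 1) + 1 / 2) / t i)]
        simp
      have hprev := ih hn (fun i h1 h2 => ht i h1 (Nat.le_succ_of_le h2))
      have htnpos : (0 : ℝ) < t n := by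
        have := hlow n (Nat.le_succ n)
        have : (1 : ℝ) ≤ (n : ℝ) := by exact_mod_cast hn
        have := hlow n (Nat.le_succ n)
        linarith [hlow n (Nat.le_succ n), (by exact_mod_cast hn : (1:ℝ) ≤ (n:ℝ))]
      -- key step: 1 - t n / t (n+1) ≤ log (t (n+1)) - log (t n)
      have hkey : 1 - (t n + 1 / 2) / t (n + 1) ≤ Real.log (t (n + 1)) - Real.log (t n) := by
        have hq : (0 : ℝ) < t n / t (n + 1) := by positivity
        have hlog1 := Real.log_le_sub_one_of_pos hq
        rw [Real.log_div (ne_of_gt htnpos) (ne_of_gt htn1pos)] at hlog1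
        have h2 : t n / t (n + 1) ≤ (t n + 1 / 2) / t (n + 1) := by
          gcongr
          linarith
        linarith
      rw [hsum]
      linarith

/-- The overhang of any balanced loaded spinal stack of total weight `w ≥ 1` is
less than `ln w + 1`: if `t 0 = 0`, `t i - t (i-1) ≥ 1` for `1 ≤ i ≤ k` and
`t k = w`, then `∑_{i=1}^k (1 - (t (i-1) + 1/2) / t i) < ln w + 1`. -/
theorem spinal_overhang_upper (k : ℕ) (t : ℕ → ℝ) (w : ℝ) (hw : 1 ≤ w)
    (ht0 : t 0 = 0)
    (ht : ∀ i, 1 ≤ i → i ≤ k → 1 ≤ t i - t (i - 1))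
    (htk : t k = w) :
    ∑ i ∈ Finset.Icc 1 k, (1 - (t (i - 1) + 1 / 2) / t i) < Real.log w + 1 := by
  rcases Nat.eq_zero_or_pos k with hk | hk
  · subst hk
    simp only [Finset.Icc_eq_empty_of_lt (by norm_num : (1:ℕ) > 0), Finset.sum_empty]
    have := Real.log_nonneg hw
    linarith
  · have := spinal_aux t ht0 k hk ht
    rwa [htk] at this
end

section
/- For every integer k ≥ 1, ∑_{i=1}^k (2/i − 3/(2 i^2)) > 2·ln k + 2γ − π^2/4, where γ is the Euler–Mascheroni constant. In particular, for k = ⌊√w⌋ with w ≥ 1, this sum exceeds ln w − 1.313. -/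
open Real Filter Finset

namespace SpinalAux

/-- Partial sums of `∑ 1/i²`. -/
noncomputable def S (k : ℕ) : ℝ := ∑ i ∈ Finset.Icc 1 k, 1 / (i : ℝ) ^ 2

lemma S_succ (n : ℕ) : S (n + 1) = S n + 1 / ((n : ℝ) + 1) ^ 2 := by
  rw [S, S, Finset.sum_Icc_succ_top (by omega)]
  push_cast
  ring

lemma S_lt (k : ℕ) : S k < Real.pi ^ 2 / 6 := by
  have h1 : S (k + 1) ≤ Real.pi ^ 2 / 6 := by
    rw [S]
    exact sum_le_hasSum _ (fun i _ => by positivity) hasSum_zeta_two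
  have h2 : (0:ℝ) < 1 / ((k : ℝ) + 1) ^ 2 := by positivity
  have h3 := S_succ k
  linarith

/-- `x - x²/2 ≤ log (1+x)` for `x ≥ 0`. -/
lemma log_lower {x : ℝ} (hx : 0 ≤ x) : x - x ^ 2 / 2 ≤ Real.log (1 + x) := by
  set f : ℝ → ℝ := fun t => Real.log (1 + t) - t + t ^ 2 / 2 with hf
  have key : MonotoneOn f (Set.Ici 0) := by
    apply monotoneOn_of_hasDerivWithinAt_nonneg (f' := fun t => t ^ 2 / (1 + t))
      (convex_Ici 0)
    · intro t ht
      have h1 : (0:ℝ) < 1 + t := by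
        simp only [Set.mem_Ici] at ht; linarith
      have hc : ContinuousAt f t := by
        have hlog : ContinuousAt (fun s : ℝ => Real.log (1 + s)) t :=
          (Real.continuousAt_log h1.ne').comp (continuousAt_const.add continuousAt_id)
        exact (hlog.sub continuousAt_id).add (by fun_prop)
      exact hc.continuousWithinAt
    · intro t ht
      rw [interior_Ici] at ht
      have h1 : (0:ℝ) < 1 + t := by
        simp only [Set.mem_Ioi] at ht; linarith
      have hlog : HasDerivAt (fun s : ℝ => Real.log (1 + s)) (1 / (1 + t)) t := by
        have := (((hasDerivAt_id t).const_add 1).log h1.ne')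
        simpa using this
      have hd : HasDerivAt f (1 / (1 + t) - 1 + 2 * t ^ 1 / 2) t :=
        ((hlog.sub (hasDerivAt_id t)).add ((hasDerivAt_pow 2 t).div_const 2))
      have heq : 1 / (1 + t) - 1 + 2 * t ^ 1 / 2 = t ^ 2 / (1 + t) := by
        field_simp
        ring
      rw [heq] at hd
      exact hd.hasDerivWithinAt
    · intro t ht
      rw [interior_Ici] at ht
      have h1 : (0:ℝ) < 1 + t := by
        simp only [Set.mem_Ioi] at ht; linarith
      positivity
  have h0 : f 0 ≤ f x := key (by simp) (by simpa using hx) hx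
  simp only [hf] at h0
  norm_num at h0
  linarith

/-- `log (1+x) ≤ x - x²/(2(1+x))` for `x ≥ 0`. -/
lemma log_upper {x : ℝ} (hx : 0 ≤ x) :
    Real.log (1 + x) ≤ x - x ^ 2 / (2 * (1 + x)) := by
  set f : ℝ → ℝ := fun t => t - t ^ 2 / (2 * (1 + t)) - Real.log (1 + t) with hf
  have key : MonotoneOn f (Set.Ici 0) := by
    apply monotoneOn_of_hasDerivWithinAt_nonneg
      (f' := fun t => t ^ 2 / (2 * (1 + t) ^ 2)) (convex_Ici 0)
    · intro t ht
      have h1 : (0:ℝ) < 1 + t := by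
        simp only [Set.mem_Ici] at ht; linarith
      have hlog : ContinuousAt (fun s : ℝ => Real.log (1 + s)) t :=
        (Real.continuousAt_log h1.ne').comp (continuousAt_const.add continuousAt_id)
      have hq : ContinuousAt (fun s : ℝ => s ^ 2 / (2 * (1 + s))) t := by
        apply ContinuousAt.div (by fun_prop) (by fun_prop)
        positivity
      exact ((continuousAt_id.sub hq).sub hlog).continuousWithinAt
    · intro t ht
      rw [interior_Ici] at ht
      have h1 : (0:ℝ) < 1 + t := by
        simp only [Set.mem_Ioi] at ht; linarith
      have h2 : (2 : ℝ) * (1 + t) ≠ 0 := by positivity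
      have hlog : HasDerivAt (fun s : ℝ => Real.log (1 + s)) (1 / (1 + t)) t := by
        have := (((hasDerivAt_id t).const_add 1).log h1.ne')
        simpa using this
      have hq : HasDerivAt (fun s : ℝ => s ^ 2 / (2 * (1 + s)))
          ((2 * t ^ 1 * (2 * (1 + t)) - t ^ 2 * (2 * 1)) / (2 * (1 + t)) ^ 2) t :=
        (hasDerivAt_pow 2 t).div (((hasDerivAt_id t).const_add 1).const_mul 2) h2
      have hd : HasDerivAt f
          (1 - (2 * t ^ 1 * (2 * (1 + t)) - t ^ 2 * (2 * 1)) / (2 * (1 + t)) ^ 2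
            - 1 / (1 + t)) t :=
        ((hasDerivAt_id t).sub hq).sub hlog
      have heq : 1 - (2 * t ^ 1 * (2 * (1 + t)) - t ^ 2 * (2 * 1)) / (2 * (1 + t)) ^ 2
          - 1 / (1 + t) = t ^ 2 / (2 * (1 + t) ^ 2) := by
        field_simp
        ring
      rw [heq] at hd
      exact hd.hasDerivWithinAt
    · intro t ht
      rw [interior_Ici] at ht
      have h1 : (0:ℝ) < 1 + t := by
        simp only [Set.mem_Ioi] at ht; linarith
      positivity
  have h0 : f 0 ≤ f x := key (by simp) (by simpa using hx) hx
  simp only [hf] at h0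
  norm_num at h0
  linarith

lemma seq_succ (n : ℕ) : Real.eulerMascheroniSeq (n + 1) =
    Real.eulerMascheroniSeq n + (1 / ((n : ℝ) + 1) - Real.log (1 + 1 / ((n : ℝ) + 1))) := by
  have h1 : (0:ℝ) < (n : ℝ) + 1 := by positivity
  have hlog : Real.log (1 + 1 / ((n : ℝ) + 1))
      = Real.log ((n : ℝ) + 1 + 1) - Real.log ((n : ℝ) + 1) := by
    rw [← Real.log_div (by positivity) h1.ne']
    congr 1
    field_simp
  rw [Real.eulerMascheroniSeq, Real.eulerMascheroniSeq, harmonic_succ, hlog]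
  push_cast
  ring

lemma stepA (n : ℕ) : Real.eulerMascheroniSeq (n + 1) ≤
    Real.eulerMascheroniSeq n + (1 / ((n : ℝ) + 1) ^ 2) / 2 := by
  rw [seq_succ]
  have hx : (0:ℝ) ≤ 1 / ((n : ℝ) + 1) := by positivity
  have h := log_lower hx
  have heq : (1 / ((n : ℝ) + 1)) ^ 2 = 1 / ((n : ℝ) + 1) ^ 2 := by
    rw [div_pow]; norm_num
  linarith

lemma stepB (n : ℕ) : Real.eulerMascheroniSeq n +
    (1 / ((n : ℝ) + 1) - 1 / ((n : ℝ) + 2)) / 2 ≤ Real.eulerMascheroniSeq (n + 1) := by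
  rw [seq_succ]
  have hx : (0:ℝ) ≤ 1 / ((n : ℝ) + 1) := by positivity
  have h := log_upper hx
  have h1 : ((n:ℝ) + 1) ≠ 0 := by positivity
  have h2 : ((n:ℝ) + 2) ≠ 0 := by positivity
  have heq : (1 / ((n : ℝ) + 1)) ^ 2 / (2 * (1 + 1 / ((n : ℝ) + 1)))
      = (1 / ((n : ℝ) + 1) - 1 / ((n : ℝ) + 2)) / 2 := by
    field_simp
    ring
  linarith

lemma accA (k m : ℕ) (h : k ≤ m) : Real.eulerMascheroniSeq m ≤
    Real.eulerMascheroniSeq k + (S m - S k) / 2 := by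
  induction m, h using Nat.le_induction with
  | base => simp
  | succ n hn ih =>
    have h1 := stepA n
    have h2 := S_succ n
    linarith

lemma accB (k m : ℕ) (h : k ≤ m) : Real.eulerMascheroniSeq k +
    (1 / (2 * ((k : ℝ) + 1)) - 1 / (2 * ((m : ℝ) + 1)))
      ≤ Real.eulerMascheroniSeq m := by
  induction m, h using Nat.le_induction with
  | base => simp
  | succ n hn ih =>
    have h1 := stepB n
    have hp1 : ((n:ℝ) + 1) ≠ 0 := by positivity
    have hp2 : ((n:ℝ) + 2) ≠ 0 := by positivity
    have e1 : (1 / ((n : ℝ) + 1) - 1 / ((n : ℝ) + 2)) / 2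
        = 1 / (2 * ((n : ℝ) + 1)) - 1 / (2 * ((n : ℝ) + 2)) := by
      field_simp
    have e2 : ((n + 1 : ℕ) : ℝ) + 1 = (n : ℝ) + 2 := by push_cast; ring
    rw [e2]
    rw [e1] at h1
    linarith

lemma gamma_le (k : ℕ) : Real.eulerMascheroniConstant ≤
    Real.eulerMascheroniSeq k + (Real.pi ^ 2 / 6 - S k) / 2 := by
  apply le_of_tendsto Real.tendsto_eulerMascheroniSeq
  filter_upwards [eventually_ge_atTop k] with m hm
  have h1 := accA k m hm
  have h2 := S_lt m
  linarith

lemma gamma_ge (k : ℕ) : Real.eulerMascheroniSeq k + 1 / (2 * ((k : ℝ) + 1))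
    ≤ Real.eulerMascheroniConstant := by
  have hf : Tendsto (fun m : ℕ => Real.eulerMascheroniSeq k +
      (1 / (2 * ((k : ℝ) + 1)) - 1 / (2 * ((m : ℝ) + 1)))) atTop
      (nhds (Real.eulerMascheroniSeq k + (1 / (2 * ((k : ℝ) + 1)) - 0))) := by
    apply tendsto_const_nhds.add
    apply tendsto_const_nhds.sub
    have h0 : Tendsto (fun m : ℕ => (1/2 : ℝ) * (1 / ((m : ℝ) + 1))) atTop
        (nhds ((1/2 : ℝ) * 0)) := tendsto_one_div_add_atTop_nhds_zero_nat.const_mul _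
    simp only [mul_zero] at h0
    convert h0 using 2 with m
    have hp : ((m:ℝ) + 1) ≠ 0 := by positivity
    field_simp
  have := le_of_tendsto_of_tendsto hf Real.tendsto_eulerMascheroniSeq ?_
  · simpa using this
  · filter_upwards [eventually_ge_atTop k] with m hm
    exact accB k m hm

lemma harmonic_cast (k : ℕ) :
    ((harmonic k : ℚ) : ℝ) = ∑ i ∈ Finset.Icc 1 k, 1 / (i : ℝ) := by
  induction k with
  | zero => simp
  | succ n ih =>
    rw [harmonic_succ, Finset.sum_Icc_succ_top (by omega), ← ih]
    push_cast
    ring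

lemma harmonic_127 : harmonic 127 =
    36224297430743310519741406921577722033292201622850612663 /
      6676878045498705789701874602220118271269436344024536000 := by
  norm_num [harmonic, Finset.sum_range_succ]

/-- The key numeric inequality `2γ ≥ π²/4 - 1.313`. -/
lemma gamma_num : Real.pi ^ 2 / 4 - 1.313 ≤ 2 * Real.eulerMascheroniConstant := by
  have h1 := gamma_ge 127
  have h2 : Real.eulerMascheroniSeq 127 =
      ((harmonic 127 : ℚ) : ℝ) - Real.log 128 := by
    rw [Real.eulerMascheroniSeq]
    norm_num
  have h3 : Real.log 128 = 7 * Real.log 2 := by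
    rw [show (128:ℝ) = 2 ^ (7:ℕ) by norm_num, Real.log_pow]
    norm_num
  have h4 : ((harmonic 127 : ℚ) : ℝ) =
      36224297430743310519741406921577722033292201622850612663 /
        6676878045498705789701874602220118271269436344024536000 := by
    rw [harmonic_127]
    push_cast
    norm_num
  have h5 := Real.log_two_lt_d9
  have h6 := Real.pi_lt_d6
  have h7 := Real.pi_pos
  have h8 : Real.pi ^ 2 < 3.141593 ^ 2 := by nlinarith
  rw [h2, h3, h4] at h1
  norm_num at h1 h8 ⊢
  nlinarith

lemma sum_eq (k : ℕ) :
    ∑ i ∈ Finset.Icc 1 k, (2 / (i : ℝ) - 3 / (2 * (i : ℝ) ^ 2)) =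
      2 * (∑ i ∈ Finset.Icc 1 k, 1 / (i : ℝ)) - (3/2) * S k := by
  rw [S, Finset.mul_sum, Finset.mul_sum, ← Finset.sum_sub_distrib]
  apply Finset.sum_congr rfl
  intro i _
  ring

end SpinalAux

open SpinalAux

/-- For every integer `k ≥ 1`,
`∑_{i=1}^k (2/i - 3/(2 i^2)) > 2 ln k + 2γ - π²/4`, where `γ` is the
Euler–Mascheroni constant; in particular for `k = ⌊√w⌋` with `w ≥ 1` this sum
exceeds `ln w - 1.313`. -/
theorem spinal_lower_sum :
    (∀ k : ℕ, 1 ≤ k →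
      ∑ i ∈ Finset.Icc 1 k, (2 / (i : ℝ) - 3 / (2 * (i : ℝ) ^ 2)) >
        2 * Real.log k + 2 * Real.eulerMascheroniConstant - Real.pi ^ 2 / 4) ∧
    (∀ w : ℝ, 1 ≤ w →
      ∑ i ∈ Finset.Icc 1 ⌊Real.sqrt w⌋₊, (2 / (i : ℝ) - 3 / (2 * (i : ℝ) ^ 2)) >
        Real.log w - 1.313) := by
  constructor
  · intro k hk
    rw [sum_eq]
    have h1 : Real.eulerMascheroniConstant < Real.eulerMascheroniSeq' k :=
      Real.eulerMascheroniConstant_lt_eulerMascheroniSeq' k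
    have h2 : Real.eulerMascheroniSeq' k = ((harmonic k : ℚ) : ℝ) - Real.log k := by
      rw [Real.eulerMascheroniSeq', if_neg (by omega)]
    have h3 := harmonic_cast k
    have h4 := S_lt k
    rw [h2, h3] at h1
    linarith
  · intro w hw
    set k := ⌊Real.sqrt w⌋₊ with hkdef
    have hw0 : (0:ℝ) < w := by linarith
    have hs1 : (1:ℝ) ≤ Real.sqrt w := Real.one_le_sqrt.mpr hw
    have hk1 : 1 ≤ k := Nat.le_floor (by exact_mod_cast hs1)
    have hklt : Real.sqrt w < (k : ℝ) + 1 := Nat.lt_floor_add_one _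
    have hwle : w ≤ ((k : ℝ) + 1) ^ 2 := by
      have := Real.sq_sqrt hw0.le
      nlinarith [Real.sqrt_nonneg w]
    have hlogw : Real.log w ≤ 2 * Real.log ((k : ℝ) + 1) := by
      have h := Real.log_le_log hw0 hwle
      rw [show ((k : ℝ) + 1) ^ 2 = ((k : ℝ) + 1) ^ (2:ℕ) from rfl,
        Real.log_pow] at h
      push_cast at h
      linarith
    rw [sum_eq]
    have hseq : Real.eulerMascheroniSeq k =
        (∑ i ∈ Finset.Icc 1 k, 1 / (i : ℝ)) - Real.log ((k : ℝ) + 1) := by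
      rw [Real.eulerMascheroniSeq, harmonic_cast]
    have hA := gamma_le k
    have hS := S_lt k
    have hnum := gamma_num
    rw [hseq] at hA
    norm_num at hnum hA ⊢
    linarith
end

section
/- There exists a balanced loaded spinal stack of weight at most w achieving overhang greater than ln w − 1.313, for every real w ≥ 1. -/
noncomputable def cterm (i : ℕ) : ℝ :=
  2 * (Real.log ((i : ℝ) + 1) - Real.log i) - (2 / (i : ℝ) - 3 / (2 * (i : ℝ) ^ 2))

noncomputable def gfun (i : ℕ) : ℝ :=
  1 / (2 * (i : ℝ) - 1) + 1 / (3 * ((i : ℝ) - 1) * i)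
    + 3 / (10 * ((i : ℝ) - 1) * i * ((i : ℝ) + 1))

lemma log_ratio_le {x : ℝ} (hx : 1 ≤ x) :
    Real.log (x + 1) - Real.log x ≤
      1/(x+1) + 1/(2*(x+1)^2) + 1/(3*(x+1)^3) + 1/(x*(x+1)^3) := by
  have hx0 : 0 < x := by linarith
  have hx1 : 0 < x + 1 := by linarith
  set y : ℝ := 1/(x+1) with hy
  have hy0 : 0 < y := by positivity
  have hy1 : y < 1 := by rw [hy, div_lt_one hx1]; linarith
  have habs : |y| < 1 := by rw [abs_of_pos hy0]; exact hy1
  have h := Real.abs_log_sub_add_sum_range_le habs 3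
  rw [abs_of_pos hy0] at h
  have hsum : ∑ i ∈ Finset.range 3, y^(i+1)/(i+1) = y + y^2/2 + y^3/3 := by
    norm_num [Finset.sum_range_succ]
  have h1y : 1 - y = x / (x+1) := by rw [hy]; field_simp; ring
  have hlog1 : Real.log (1 - y) = Real.log x - Real.log (x+1) := by
    rw [h1y, Real.log_div (ne_of_gt hx0) (ne_of_gt hx1)]
  rw [hsum, hlog1] at h
  have h2 := (abs_le.mp h).1
  have hrem : y^(3+1)/(1-y) = 1/(x*(x+1)^3) := by
    rw [h1y, hy]; simp only [Nat.reduceAdd]; field_simp [hx0.ne', hx1.ne']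
  have e1 : y^2/2 = 1/(2*(x+1)^2) := by rw [hy]; field_simp
  have e2 : y^3/3 = 1/(3*(x+1)^3) := by rw [hy]; field_simp
  rw [hrem] at h2
  rw [hy] at h2 e1 e2
  linarith [h2, e1, e2]

lemma log_ratio_ge {x : ℝ} (hx : 1 ≤ x) :
    1/(x+1) + 1/(2*(x+1)^2) - 1/(x*(x+1)^2) ≤ Real.log (x + 1) - Real.log x := by
  have hx0 : 0 < x := by linarith
  have hx1 : 0 < x + 1 := by linarith
  set y : ℝ := 1/(x+1) with hy
  have hy0 : 0 < y := by positivity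
  have hy1 : y < 1 := by rw [hy, div_lt_one hx1]; linarith
  have habs : |y| < 1 := by rw [abs_of_pos hy0]; exact hy1
  have h := Real.abs_log_sub_add_sum_range_le habs 2
  rw [abs_of_pos hy0] at h
  have hsum : ∑ i ∈ Finset.range 2, y^(i+1)/(i+1) = y + y^2/2 := by
    norm_num [Finset.sum_range_succ]
  have h1y : 1 - y = x / (x+1) := by rw [hy]; field_simp; ring
  have hlog1 : Real.log (1 - y) = Real.log x - Real.log (x+1) := by
    rw [h1y, Real.log_div (ne_of_gt hx0) (ne_of_gt hx1)]
  rw [hsum, hlog1] at h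
  have h2 := (abs_le.mp h).2
  have hrem : y^(2+1)/(1-y) = 1/(x*(x+1)^2) := by
    rw [h1y, hy]; simp only [Nat.reduceAdd]; field_simp [hx0.ne', hx1.ne']
  have e1 : y^2/2 = 1/(2*(x+1)^2) := by rw [hy]; field_simp
  rw [hrem] at h2
  rw [hy] at h2 e1
  linarith [h2, e1]

lemma cterm_nonneg {i : ℕ} (hi : 1 ≤ i) : 0 ≤ cterm i := by
  have hx : (1:ℝ) ≤ (i:ℝ) := by exact_mod_cast hi
  set x : ℝ := (i:ℝ)
  have hx0 : 0 < x := by linarith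
  have hx1 : 0 < x + 1 := by linarith
  have hlow := log_ratio_ge hx
  have key : 2*(1/(x+1) + 1/(2*(x+1)^2) - 1/(x*(x+1)^2)) - (2/x - 3/(2*x^2))
      = (x^2 - 2*x + 3)/(2*x^2*(x+1)^2) := by
    field_simp [hx0.ne', hx1.ne']
    ring
  have hpos : 0 ≤ (x^2 - 2*x + 3)/(2*x^2*(x+1)^2) := by
    have h1 : 0 ≤ x^2 - 2*x + 3 := by nlinarith [sq_nonneg (x-1)]
    positivity
  unfold cterm
  linarith

lemma cterm_le {i : ℕ} (hi : 51 ≤ i) : cterm i ≤ gfun i - gfun (i+1) := by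
  have hx51 : (51:ℝ) ≤ (i:ℝ) := by exact_mod_cast hi
  set x : ℝ := (i:ℝ) with hxdef
  have hx : (1:ℝ) ≤ x := by linarith
  have hx0 : 0 < x := by linarith
  have hup := log_ratio_le hx
  have hcast : ((i+1 : ℕ) : ℝ) = x + 1 := by push_cast [hxdef]; ring
  have h1 : (0:ℝ) < 2*x-1 := by linarith
  have h2 : (0:ℝ) < 2*x+1 := by linarith
  have h3 : (0:ℝ) < x-1 := by linarith
  have h4 : (0:ℝ) < x+1 := by linarith
  have h5 : (0:ℝ) < x+2 := by linarith
  have hu : (0:ℝ) ≤ x - 51 := by linarith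
  have gi : gfun i = 1/(2*x-1) + 1/(3*(x-1)*x) + 3/(10*(x-1)*x*(x+1)) := by
    unfold gfun; rw [← hxdef]
  have gi1 : gfun (i+1) = 1/(2*x+1) + 1/(3*x*(x+1)) + 3/(10*x*(x+1)*(x+2)) := by
    unfold gfun; rw [hcast]; ring_nf
  have key : (gfun i - gfun (i+1)) -
      (2*(1/(x+1) + 1/(2*(x+1)^2) + 1/(3*(x+1)^3) + 1/(x*(x+1)^3)) - (2/x - 3/(2*x^2)))
      = (3*x^5 + 356*x^4 + 931*x^3 + 136*x^2 - 292*x - 90) /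
        (30*((2*x-1)*(2*x+1)*(x-1)*x^2*(x+1)^3*(x+2))) := by
    rw [gi, gi1]
    field_simp [hx0.ne', h4.ne', h1.ne', h2.ne', h3.ne', h5.ne']
    ring
  have hN : 0 ≤ 3*x^5 + 356*x^4 + 931*x^3 + 136*x^2 - 292*x - 90 := by
    nlinarith [pow_nonneg hu 2, pow_nonneg hu 3, pow_nonneg hu 4, pow_nonneg hu 5, hu]
  have hD : 0 < 30*((2*x-1)*(2*x+1)*(x-1)*x^2*(x+1)^3*(x+2)) := by positivity
  have hfrac : 0 ≤ (3*x^5 + 356*x^4 + 931*x^3 + 136*x^2 - 292*x - 90) /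
        (30*((2*x-1)*(2*x+1)*(x-1)*x^2*(x+1)^3*(x+2))) := div_nonneg hN hD.le
  unfold cterm
  linarith

lemma gfun_nonneg {i : ℕ} (hi : 2 ≤ i) : 0 ≤ gfun i := by
  have hx : (2:ℝ) ≤ (i:ℝ) := by exact_mod_cast hi
  set x : ℝ := (i:ℝ)
  have h1 : (0:ℝ) < 2*x-1 := by linarith
  have h2 : (0:ℝ) < 3*(x-1)*x := by nlinarith
  have h3 : (0:ℝ) < 10*(x-1)*x*(x+1) := by nlinarith
  unfold gfun
  have := div_nonneg (by norm_num : (0:ℝ) ≤ 1) h1.le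
  have := div_nonneg (by norm_num : (0:ℝ) ≤ 1) h2.le
  have := div_nonneg (by norm_num : (0:ℝ) ≤ 3) h3.le
  linarith

lemma sum_logdiff (k : ℕ) :
    ∑ i ∈ Finset.Icc 1 k, (Real.log ((i : ℝ) + 1) - Real.log i) = Real.log ((k : ℝ) + 1) := by
  induction k with
  | zero => simp
  | succ n ih =>
    rw [Finset.sum_Icc_succ_top (by omega : 1 ≤ n + 1), ih]
    push_cast
    ring

lemma csum_eq (k : ℕ) :
    ∑ i ∈ Finset.Icc 1 k, cterm i
      = 2 * Real.log ((k : ℝ) + 1)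
        - ∑ i ∈ Finset.Icc 1 k, (2 / (i : ℝ) - 3 / (2 * (i : ℝ) ^ 2)) := by
  unfold cterm
  rw [Finset.sum_sub_distrib, ← Finset.mul_sum, sum_logdiff]

lemma g_telescope {k : ℕ} (hk : 50 ≤ k) :
    ∑ i ∈ Finset.Ioc 50 k, (gfun i - gfun (i+1)) = gfun 51 - gfun (k+1) := by
  induction k, hk using Nat.le_induction with
  | base => simp
  | succ n hn ih =>
    rw [Finset.sum_Ioc_succ_top (by omega : 50 ≤ n), ih]
    ring

lemma q50_eval :
    ∑ i ∈ Finset.Icc (1:ℕ) 50, (2 / (i : ℝ) - 3 / (2 * (i : ℝ) ^ 2)) =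
      8401277079806300287739417084160452522113651/1280543578572975399733674350767953040128000 := by
  rw [← Finset.Ico_add_one_right_eq_Icc, Finset.sum_Ico_eq_sum_range]
  norm_num [Finset.sum_range_succ]

lemma log51_le : Real.log 51 ≤ 3.93183 := by
  rw [Real.log_le_iff_le_exp (by norm_num)]
  have h := Real.sum_le_exp_of_nonneg (show (0:ℝ) ≤ 3.93183 by norm_num) 18
  refine le_trans ?_ h
  norm_num [Finset.sum_range_succ, Nat.factorial]

lemma icc_eq_ioc (n : ℕ) : Finset.Icc 1 n = Finset.Ioc 0 n := by
  ext a; simp [Finset.mem_Icc, Finset.mem_Ioc]; omega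

lemma csum_le (k : ℕ) : ∑ i ∈ Finset.Icc 1 k, cterm i ≤ 1.313 := by
  have hg51 : gfun 51 = 4031429/401778000 := by unfold gfun; norm_num
  have h50 : ∑ i ∈ Finset.Icc 1 50, cterm i
      = 2 * Real.log (((50:ℕ) : ℝ) + 1)
        - 8401277079806300287739417084160452522113651/1280543578572975399733674350767953040128000 := by
    rw [csum_eq 50, q50_eval]
  have h51 : (((50:ℕ) : ℝ) + 1) = 51 := by norm_num
  rw [h51] at h50
  have hlog := log51_le
  have hbound : ∑ i ∈ Finset.Icc 1 50, cterm i + gfun 51 ≤ 1.313 := by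
    rw [h50, hg51]
    have : (2:ℝ) * Real.log 51 ≤ 2 * 3.93183 := by linarith
    norm_num at this ⊢
    linarith
  by_cases hk : k ≤ 50
  · have hsub : ∑ i ∈ Finset.Icc 1 k, cterm i ≤ ∑ i ∈ Finset.Icc 1 50, cterm i := by
      apply Finset.sum_le_sum_of_subset_of_nonneg (Finset.Icc_subset_Icc_right hk)
      intro i hi _
      exact cterm_nonneg (Finset.mem_Icc.mp hi).1
    have hg : 0 ≤ gfun 51 := gfun_nonneg (by norm_num)
    linarith
  · push_neg at hk
    have hk' : 50 ≤ k := by omega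
    have hsplit : ∑ i ∈ Finset.Icc 1 k, cterm i
        = ∑ i ∈ Finset.Icc 1 50, cterm i + ∑ i ∈ Finset.Ioc 50 k, cterm i := by
      rw [icc_eq_ioc, icc_eq_ioc, Finset.sum_Ioc_consecutive _ (by omega : 0 ≤ 50) hk']
    have htail : ∑ i ∈ Finset.Ioc 50 k, cterm i ≤ gfun 51 - gfun (k+1) := by
      rw [← g_telescope hk']
      apply Finset.sum_le_sum
      intro i hi
      have h1 := (Finset.mem_Ioc.mp hi).1
      exact cterm_le (by omega)
    have hgk : 0 ≤ gfun (k+1) := gfun_nonneg (by omega)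
    linarith

/-- For every `w ≥ 1` there is a balanced loaded spinal stack of weight at most
`w` (with `k` spine blocks and total weight `k^2 ≤ w`) whose overhang
`∑_{i=1}^k (2/i - 3/(2 i^2))` exceeds `ln w - 1.313`. -/
theorem spinal_lower_bound (w : ℝ) (hw : 1 ≤ w) :
    ∃ k : ℕ, 1 ≤ k ∧ (k : ℝ) ^ 2 ≤ w ∧
      ∑ i ∈ Finset.Icc 1 k, (2 / (i : ℝ) - 3 / (2 * (i : ℝ) ^ 2)) >
        Real.log w - 1.313 := by
  have hw0 : (0:ℝ) < w := by linarith
  set k : ℕ := Nat.sqrt ⌊w⌋₊ with hkdef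
  have hfl1 : 1 ≤ ⌊w⌋₊ := Nat.le_floor (by exact_mod_cast hw)
  have hk1 : 1 ≤ k := by
    have h := (Nat.sqrt_pos (n := ⌊w⌋₊)).mpr (by omega)
    omega
  refine ⟨k, hk1, ?_, ?_⟩
  · have h1 : k ^ 2 ≤ ⌊w⌋₊ := Nat.sqrt_le' ⌊w⌋₊
    have h2 : ((⌊w⌋₊ : ℝ)) ≤ w := Nat.floor_le hw0.le
    have h3 : ((k ^ 2 : ℕ) : ℝ) ≤ (⌊w⌋₊ : ℝ) := by exact_mod_cast h1
    push_cast at h3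
    nlinarith
  · have hup : w < ((k:ℝ) + 1)^2 := by
      have h1 : ⌊w⌋₊ < (k+1) ^ 2 := Nat.lt_succ_sqrt' ⌊w⌋₊
      have h2 : ⌊w⌋₊ + 1 ≤ (k+1) ^ 2 := by omega
      have h3 : ((⌊w⌋₊ + 1 : ℕ) : ℝ) ≤ (((k+1) ^ 2 : ℕ) : ℝ) := by exact_mod_cast h2
      have h4 : w < (⌊w⌋₊ : ℝ) + 1 := Nat.lt_floor_add_one w
      push_cast at h3
      nlinarith
    have hlogw : Real.log w < 2 * Real.log ((k:ℝ) + 1) := by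
      have h1 : Real.log w < Real.log (((k:ℝ) + 1)^2) := Real.log_lt_log hw0 hup
      rwa [Real.log_pow, Nat.cast_ofNat] at h1
    have hcs := csum_le k
    have hce := csum_eq k
    linarith
end
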